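/- The villainy of the disjoint union of three edges, K_2 + K_2 + K_2, is 2. -/

import Mathlib

open Finset

variable {V : Type*}

/-- A proper coloring given as a function to ℕ. -/
def IsProperColoring (G : SimpleGraph V) (c : V → ℕ) : Prop :=
  ∀ ⦃u v⦄, G.Adj u v → c u ≠ c v

variable [Fintype V] [DecidableEq V]

/-- Two colorings use every color the same number of times. -/
def SameColorCounts (c c' : V → ℕ) : Prop :=
  ∀ k : ℕ, (univ.filter fun v => c v = k).card = (univ.filter fun v => c' v = k).card

/-- The number of vertices on which two colorings differ. -/
def recolorCount (c c' : V → ℕ) : ℕ := (univ.filter fun v => c v ≠ c' v).card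

/-- The ℕ-valued chromatic number. -/
noncomputable def chromNum (G : SimpleGraph V) : ℕ := G.chromaticNumber.toNat

/-- A proper coloring of `G` using exactly `χ(G)` colors. -/
noncomputable def IsOptimalColoring (G : SimpleGraph V) (f : V → ℕ) : Prop :=
  IsProperColoring G f ∧ (univ.image f).card = chromNum G

/-- The villainy of a coloring `c`: the least number of vertices that must be
recolored to obtain a proper coloring using each color as often as `c` does. -/
noncomputable def colVillainy (G : SimpleGraph V) (c : V → ℕ) : ℕ :=
  sInf {n | ∃ c', IsProperColoring G c' ∧ SameColorCounts c c' ∧ recolorCount c c' = n}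

/-- `c` is a permutation of the coloring `f`. -/
def IsPermutationOf (c f : V → ℕ) : Prop := ∃ σ : Equiv.Perm V, c = f ∘ σ

/-- The villainy of `G`: the maximum villainy over all permutations of optimal
proper colorings of `G`. -/
noncomputable def villainy (G : SimpleGraph V) : ℕ :=
  sSup {n | ∃ f c, IsOptimalColoring G f ∧ IsPermutationOf c f ∧ colVillainy G c = n}


/-!
An optimal coloring of `K₂ + K₂ + K₂` uses two colors, each on three vertices. In a permutation of
it the monochromatic edges therefore come in pairs of opposite colors, and with three edges there is
at most one such pair; swapping one endpoint of each of its two edges gives a proper coloring with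
the same color counts at the cost of two recolorings. Conversely, the permutation `0 0 | 1 1 | 0 1`
of the coloring `0 1 | 0 1 | 0 1` is improper, and recoloring a single vertex always changes the
color counts, so it needs two recolorings.
-/

section

variable {α : Type*} [Fintype α]

theorem card_filter_comp_perm (p : α → Prop) [DecidablePred p] (σ : Equiv.Perm α) :
    #{x | p (σ x)} = #{x | p x} :=
  card_equiv σ (by simp)

theorem SameColorCounts.symm {c c' : α → ℕ} (h : SameColorCounts c c') : SameColorCounts c' c :=
  fun k => (h k).symm

theorem sameColorCounts_comp_perm (c : α → ℕ) (σ : Equiv.Perm α) : SameColorCounts c (c ∘ σ) :=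
  fun k => (card_filter_comp_perm (c · = k) σ).symm

theorem recolorCount_eq_zero_iff {c c' : α → ℕ} : recolorCount c c' = 0 ↔ c = c' := by
  simp [recolorCount, funext_iff]

theorem recolorCount_comp_swap_le [DecidableEq α] (c : α → ℕ) (u v : α) :
    recolorCount c (c ∘ Equiv.swap u v) ≤ 2 := by
  have hsub : ({x | c x ≠ c (Equiv.swap u v x)} : Finset α) ⊆ {u, v} := by
    intro x hx
    by_contra hxuv
    simp only [mem_insert, mem_singleton, not_or] at hxuv
    simp [Equiv.swap_apply_of_ne_of_ne hxuv.1 hxuv.2] at hx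
  exact (card_le_card hsub).trans card_le_two

theorem not_sameColorCounts_of_recolorCount_eq_one {c c' : α → ℕ}
    (h : recolorCount c c' = 1) : ¬ SameColorCounts c c' := by
  classical
  obtain ⟨v, hv⟩ := card_eq_one.mp h
  have hdiff : ∀ w, c w ≠ c' w ↔ w = v := fun w => by
    rw [← mem_singleton, ← hv, mem_filter, and_iff_right (mem_univ w)]
  have herase : ({w | c' w = c v} : Finset α) = ({w | c w = c v} : Finset α).erase v := by
    ext w
    by_cases hwv : w = v
    · subst hwv
      simpa using fun h => (hdiff w).mpr rfl h.symm
    · simp [hwv, not_not.mp (mt (hdiff w).mp hwv)]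
  intro hs
  have hcount := hs (c v)
  rw [herase, card_erase_of_mem (by simp)] at hcount
  have hpos : 0 < #({w | c w = c v} : Finset α) := card_pos.mpr ⟨v, by simp⟩
  omega

theorem exists_bool_factorization_of_card_image_eq_two {f : α → ℕ}
    (h : #(univ.image f) = 2) : ∃ φ : Bool → ℕ, φ.Injective ∧ ∃ g : α → Bool, f = φ ∘ g := by
  obtain ⟨a, b, hab, himage⟩ := card_eq_two.mp h
  have hval : ∀ x, f x = a ∨ f x = b := fun x => by
    simpa [himage] using mem_image_of_mem f (mem_univ x)
  refine ⟨fun t => cond t a b, ?_, fun x => f x = a, funext fun x => ?_⟩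
  · rintro (_ | _) (_ | _) h <;> simp_all [eq_comm]
  · rcases hval x with hx | hx <;> simp [hx, hab.symm]

variable {G : SimpleGraph α}

theorem colVillainy_le {c c' : α → ℕ} (hp : IsProperColoring G c') (hs : SameColorCounts c c') :
    colVillainy G c ≤ recolorCount c c' :=
  Nat.sInf_le ⟨c', hp, hs, rfl⟩

theorem colVillainy_le_two_of_isProperColoring_comp_swap [DecidableEq α] {c : α → ℕ} {u v : α}
    (h : IsProperColoring G (c ∘ Equiv.swap u v)) : colVillainy G c ≤ 2 :=
  (colVillainy_le h (sameColorCounts_comp_perm c _)).trans (recolorCount_comp_swap_le c u v)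

theorem two_le_colVillainy {c c' : α → ℕ} (hc : ¬ IsProperColoring G c)
    (hp : IsProperColoring G c') (hs : SameColorCounts c c') : 2 ≤ colVillainy G c := by
  obtain ⟨c'', hp'', hs'', hcount⟩ : colVillainy G c ∈
      {n | ∃ c', IsProperColoring G c' ∧ SameColorCounts c c' ∧ recolorCount c c' = n} :=
    Nat.sInf_mem ⟨_, c', hp, hs, rfl⟩
  have h0 : recolorCount c c'' ≠ 0 := fun h => hc (recolorCount_eq_zero_iff.mp h ▸ hp'')
  have h1 : recolorCount c c'' ≠ 1 := fun h => not_sameColorCounts_of_recolorCount_eq_one h hs''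
  omega

end

theorem isProperColoring_sum_iff {α β : Type*} {G : SimpleGraph α} {H : SimpleGraph β}
    {c : α ⊕ β → ℕ} :
    IsProperColoring (G ⊕g H) c ↔
      IsProperColoring G (c ∘ Sum.inl) ∧ IsProperColoring H (c ∘ Sum.inr) := by
  refine ⟨fun h => ⟨fun u v huv => h (by simpa using huv), fun u v huv => h (by simpa using huv)⟩,
    ?_⟩
  rintro ⟨hG, hH⟩ (u | u) (v | v) huv
  · exact hG (by simpa using huv)
  · simp at huv
  · simp at huv
  · exact hH (by simpa using huv)

theorem isProperColoring_top_fin_two_iff {c : Fin 2 → ℕ} :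
    IsProperColoring (⊤ : SimpleGraph (Fin 2)) c ↔ c 0 ≠ c 1 := by
  refine ⟨fun h => h (by simp), fun h u v huv => ?_⟩
  fin_cases u <;> fin_cases v <;> simp_all [eq_comm]

local notation "V₆" => (Fin 2 ⊕ Fin 2) ⊕ Fin 2

abbrev threeK2 : SimpleGraph V₆ :=
  ((⊤ : SimpleGraph (Fin 2)) ⊕g (⊤ : SimpleGraph (Fin 2))) ⊕g (⊤ : SimpleGraph (Fin 2))

theorem chromNum_threeK2 : chromNum threeK2 = 2 := by
  simp [chromNum, SimpleGraph.chromaticNumber_sum, SimpleGraph.chromaticNumber_top]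

theorem isProperColoring_threeK2_iff {c : V₆ → ℕ} :
    IsProperColoring threeK2 c ↔ c (.inl (.inl 0)) ≠ c (.inl (.inl 1)) ∧
      c (.inl (.inr 0)) ≠ c (.inl (.inr 1)) ∧ c (.inr 0) ≠ c (.inr 1) := by
  simp only [isProperColoring_sum_iff, isProperColoring_top_fin_two_iff, Function.comp_apply,
    and_assoc]

theorem card_true_eq_three_of_isProperColoring_threeK2 {φ : Bool → ℕ} {g : V₆ → Bool}
    (hg : IsProperColoring threeK2 (φ ∘ g)) : #{x | g x} = 3 := by
  have hBool : ∀ g : V₆ → Bool, g (.inl (.inl 0)) ≠ g (.inl (.inl 1)) →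
      g (.inl (.inr 0)) ≠ g (.inl (.inr 1)) → g (.inr 0) ≠ g (.inr 1) → #{x | g x} = 3 := by
    decide
  obtain ⟨h₁, h₂, h₃⟩ := isProperColoring_threeK2_iff.mp hg
  exact hBool g (ne_of_apply_ne φ h₁) (ne_of_apply_ne φ h₂) (ne_of_apply_ne φ h₃)

theorem exists_swap_isProperColoring_threeK2 {φ : Bool → ℕ} (hφ : φ.Injective)
    {g : V₆ → Bool} (hg : #{x | g x} = 3) :
    ∃ u v, IsProperColoring threeK2 (φ ∘ g ∘ Equiv.swap u v) := by
  simp only [isProperColoring_threeK2_iff, Function.comp_apply, hφ.ne_iff]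
  revert g
  decide

theorem colVillainy_threeK2_le_two {f : V₆ → ℕ} (hf : IsOptimalColoring threeK2 f)
    (σ : Equiv.Perm V₆) : colVillainy threeK2 (f ∘ σ) ≤ 2 := by
  obtain ⟨φ, hφ, g, rfl⟩ :=
    exists_bool_factorization_of_card_image_eq_two (hf.2.trans chromNum_threeK2)
  have hgσ : #{x | g (σ x)} = 3 :=
    (card_filter_comp_perm (g · = true) σ).trans
      (card_true_eq_three_of_isProperColoring_threeK2 hf.1)
  obtain ⟨u, v, huv⟩ := exists_swap_isProperColoring_threeK2 hφ hgσ
  exact colVillainy_le_two_of_isProperColoring_comp_swap huv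

def threeK2Coloring : V₆ → ℕ := Sum.elim (Sum.elim Fin.val Fin.val) Fin.val

theorem isOptimalColoring_threeK2Coloring : IsOptimalColoring threeK2 threeK2Coloring := by
  refine ⟨isProperColoring_threeK2_iff.mpr (by decide), ?_⟩
  rw [chromNum_threeK2]
  decide

theorem villainy_three_K2 :
    villainy (((⊤ : SimpleGraph (Fin 2)) ⊕g (⊤ : SimpleGraph (Fin 2)))
      ⊕g (⊤ : SimpleGraph (Fin 2))) = 2 := by
  set σ := Equiv.swap (.inl (.inl 1) : V₆) (.inl (.inr 0))
  have hbad : ¬ IsProperColoring threeK2 (threeK2Coloring ∘ σ) := by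
    rw [isProperColoring_threeK2_iff]
    decide
  have hvillain : colVillainy threeK2 (threeK2Coloring ∘ σ) = 2 :=
    le_antisymm (colVillainy_threeK2_le_two isOptimalColoring_threeK2Coloring σ)
      (two_le_colVillainy hbad isOptimalColoring_threeK2Coloring.1
        (sameColorCounts_comp_perm threeK2Coloring σ).symm)
  refine IsGreatest.csSup_eq ⟨⟨_, _, isOptimalColoring_threeK2Coloring, ⟨σ, rfl⟩, hvillain⟩, ?_⟩
  rintro n ⟨f, c, hf, ⟨τ, rfl⟩, rfl⟩
  exact colVillainy_threeK2_le_two hf τ
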